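/- In the setting of a principal H-bundle P over M with closed normal subgroup N ⊆ H, quotient bundle P̄ = P/N with orbit projection π : P → P̄, let ρ : H → GL(V) be a representation with N ⊆ ker(ρ), inducing ρ̄ : H/N → GL(V). Equip P with a principal connection HP and P̄ with the induced connection Tπ(HP). Then the pullback π^* : Ω^k(P̄,V)^{hor}_{ρ̄} → Ω^k(P,V)^{hor}_{ρ} between spaces of invariant horizontal forms is a linear bijection, and it commutes with the absolute derivatives: π^*(D_{ρ̄} θ) = D_ρ(π^* θ), where D(θ) = dθ ∘ (pr_h × ⋯ × pr_h). -/

import Mathlib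

/-!
Since `N` acts trivially on `V`, an invariant horizontal form `θ` on `P` is constant along the
fibres of `π`: two tangent vectors with the same image under `Tπ` differ, after moving one of
them by an element `g ∈ N` with `R_g p = p'` (for which `ρ g = 1`), by a vertical vector, which
`θ` ignores. Hence `θ_p(w)` depends only on `(π p, Tπ w)`, so `θ` descends to `P̄`; horizontality
and invariance transfer in both directions because `π` and `Tπ` are surjective. The absolute
derivatives agree by the chain rule, since `Tπ` maps the horizontal projection of `P` to that
of `P̄`.
-/

open scoped Manifold

section

variable
    {E1 : Type} [NormedAddCommGroup E1] [NormedSpace ℝ E1]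
    {H1 : Type} [TopologicalSpace H1] {I : ModelWithCorners ℝ E1 H1}
    {P : Type} [TopologicalSpace P] [ChartedSpace H1 P] [IsManifold I (⊤ : ℕ∞) P]
    {Eb : Type} [NormedAddCommGroup Eb] [NormedSpace ℝ Eb]
    {Hb : Type} [TopologicalSpace Hb] {Ib : ModelWithCorners ℝ Eb Hb}
    {Pb : Type} [TopologicalSpace Pb] [ChartedSpace Hb Pb]
    [IsManifold Ib (⊤ : ℕ∞) Pb]
    {V : Type} [NormedAddCommGroup V] [NormedSpace ℝ V]

noncomputable def pullbackForm (π : P → Pb) (k : ℕ)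
    (θb : ∀ x : Pb, TangentSpace Ib x [⋀^Fin k]→ₗ[ℝ] V) :
    ∀ p : P, TangentSpace I p [⋀^Fin k]→ₗ[ℝ] V := fun p =>
  (θb (π p)).compLinearMap
    (mfderiv I Ib π p : TangentSpace I p →ₗ[ℝ] TangentSpace Ib (π p))

end

theorem AlternatingMap.map_eq_of_forall_sub_mem {R M N ι : Type*} [CommRing R]
    [AddCommGroup M] [Module R M] [AddCommGroup N] [Module R N] [Fintype ι]
    (f : M [⋀^ι]→ₗ[R] N) (K : Submodule R M) (hf : ∀ v : ι → M, (∃ i, v i ∈ K) → f v = 0)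
    {u w : ι → M} (h : ∀ i, u i - w i ∈ K) : f u = f w := by
  classical
  suffices ∀ s : Finset ι, f (s.piecewise u w) = f w by simpa using this Finset.univ
  intro s
  induction s using Finset.induction_on with
  | empty => simp
  | insert i s hi ih =>
    have hsplit : u i = s.piecewise u w i + (u i - w i) := by
      simp [Finset.piecewise_eq_of_notMem _ _ _ hi]
    rw [Finset.piecewise_insert, hsplit, f.map_update_add, Function.update_eq_self,
      hf (Function.update _ i (u i - w i)) ⟨i, by simpa using h i⟩, add_zero, ih]

section FormsOnManifolds

variable {E H X : Type*} [NormedAddCommGroup E] [NormedSpace ℝ E] [TopologicalSpace H]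
    [TopologicalSpace X] [ChartedSpace H X]
    {E' H' Y : Type*} [NormedAddCommGroup E'] [NormedSpace ℝ E'] [TopologicalSpace H']
    [TopologicalSpace Y] [ChartedSpace H' Y]
    {V : Type*} [NormedAddCommGroup V] [NormedSpace ℝ V] {k : ℕ}

def IsHorizontalForm (I : ModelWithCorners ℝ E H) (I' : ModelWithCorners ℝ E' H') (q : X → Y)
    (θ : ∀ x : X, TangentSpace I x [⋀^Fin k]→ₗ[ℝ] V) : Prop :=
  ∀ (x : X) (v : Fin k → TangentSpace I x),
    (∃ i, v i ∈ LinearMap.ker (mfderiv I I' q x : TangentSpace I x →ₗ[ℝ] TangentSpace I' (q x))) →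
      θ x v = 0

def IsInvariantForm {G : Type*} (I : ModelWithCorners ℝ E H) (R : G → X → X)
    (ρ : G → V →L[ℝ] V) (θ : ∀ x : X, TangentSpace I x [⋀^Fin k]→ₗ[ℝ] V) : Prop :=
  ∀ (g : G) (x : X) (v : Fin k → TangentSpace I x),
    ρ g (θ (R g x) fun i => mfderiv I I (R g) x (v i)) = θ x v

def DescendsAlong (I : ModelWithCorners ℝ E H) (I' : ModelWithCorners ℝ E' H') (π : X → Y)
    (θ : ∀ x : X, TangentSpace I x [⋀^Fin k]→ₗ[ℝ] V) : Prop :=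
  ∀ (x x' : X) (v : Fin k → TangentSpace I x) (v' : Fin k → TangentSpace I x'), π x = π x' →
    (∀ i, mfderiv I I' π x (v i) = mfderiv I I' π x' (v' i)) → θ x v = θ x' v'

end FormsOnManifolds

section Pullback

variable
    {E1 : Type} [NormedAddCommGroup E1] [NormedSpace ℝ E1]
    {H1 : Type} [TopologicalSpace H1] {I : ModelWithCorners ℝ E1 H1}
    {P : Type} [TopologicalSpace P] [ChartedSpace H1 P]
    {Eb : Type} [NormedAddCommGroup Eb] [NormedSpace ℝ Eb]
    {Hb : Type} [TopologicalSpace Hb] {Ib : ModelWithCorners ℝ Eb Hb}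
    {Pb : Type} [TopologicalSpace Pb] [ChartedSpace Hb Pb]
    {V : Type} [NormedAddCommGroup V] [NormedSpace ℝ V]
    {EM HM M : Type*} [NormedAddCommGroup EM] [NormedSpace ℝ EM] [TopologicalSpace HM]
    {IM : ModelWithCorners ℝ EM HM} [TopologicalSpace M] [ChartedSpace HM M]
    {G : Type*} {π : P → Pb} {k : ℕ}

@[simp]
theorem pullbackForm_apply (θb : ∀ x : Pb, TangentSpace Ib x [⋀^Fin k]→ₗ[ℝ] V) (p : P)
    (v : Fin k → TangentSpace I p) :
    pullbackForm π k θb p v = θb (π p) fun i => mfderiv I Ib π p (v i) :=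
  rfl

theorem pullbackForm_add (θ₁ θ₂ : ∀ x : Pb, TangentSpace Ib x [⋀^Fin k]→ₗ[ℝ] V) :
    pullbackForm (I := I) (V := V) π k (θ₁ + θ₂)
      = pullbackForm (I := I) π k θ₁ + pullbackForm (I := I) π k θ₂ := by
  funext p
  ext v
  simp

theorem pullbackForm_smul (c : ℝ) (θ : ∀ x : Pb, TangentSpace Ib x [⋀^Fin k]→ₗ[ℝ] V) :
    pullbackForm (I := I) (V := V) π k (c • θ) = c • pullbackForm (I := I) π k θ := by
  funext p
  ext v
  simp

theorem pullbackForm_injective (hπsurj : Function.Surjective π)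
    (hπsub : ∀ p : P, Function.Surjective (mfderiv I Ib π p)) :
    Function.Injective (pullbackForm (I := I) (Ib := Ib) (V := V) π k) := by
  intro θ₁ θ₂ h
  funext x
  ext v
  obtain ⟨p, rfl⟩ := hπsurj x
  obtain ⟨w, rfl⟩ := (hπsub p).comp_left v
  exact congrArg (fun θ => θ p w) h

theorem isHorizontalForm_pullbackForm_iff {qb : Pb → M} (hπsurj : Function.Surjective π)
    (hπsub : ∀ p : P, Function.Surjective (mfderiv I Ib π p)) (hqb : MDifferentiable Ib IM qb)
    (hπ : MDifferentiable I Ib π) {θb : ∀ x : Pb, TangentSpace Ib x [⋀^Fin k]→ₗ[ℝ] V} :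
    IsHorizontalForm I IM (qb ∘ π) (pullbackForm π k θb) ↔ IsHorizontalForm Ib IM qb θb := by
  have hchain : ∀ p (u : TangentSpace I p),
      mfderiv I IM (qb ∘ π) p u = mfderiv Ib IM qb (π p) (mfderiv I Ib π p u) :=
    fun p u => mfderiv_comp_apply p (hqb _) (hπ p) u
  constructor
  · intro h x v ⟨i, hi⟩
    obtain ⟨p, rfl⟩ := hπsurj x
    obtain ⟨w, rfl⟩ := (hπsub p).comp_left v
    exact h p w ⟨i, by simpa [hchain] using hi⟩
  · intro h p v ⟨i, hi⟩
    exact h (π p) _ ⟨i, by simpa [hchain] using hi⟩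

theorem isInvariantForm_pullbackForm_iff {R : G → P → P} {Rb : G → Pb → Pb}
    {ρ : G → V →L[ℝ] V} (hπsurj : Function.Surjective π)
    (hπsub : ∀ p : P, Function.Surjective (mfderiv I Ib π p)) (hπ : MDifferentiable I Ib π)
    (hR : ∀ g, MDifferentiable I I (R g)) (hRb : ∀ g, MDifferentiable Ib Ib (Rb g))
    (hcomm : ∀ g, π ∘ R g = Rb g ∘ π) {θb : ∀ x : Pb, TangentSpace Ib x [⋀^Fin k]→ₗ[ℝ] V} :
    IsInvariantForm I R ρ (pullbackForm π k θb) ↔ IsInvariantForm Ib Rb ρ θb := by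
  have hshift : ∀ g p (w : Fin k → TangentSpace I p),
      pullbackForm π k θb (R g p) (fun i => mfderiv I I (R g) p (w i))
        = θb (Rb g (π p)) fun i => mfderiv Ib Ib (Rb g) (π p) (mfderiv I Ib π p (w i)) := by
    intro g p w
    have hd : ∀ u, mfderiv I Ib π (R g p) (mfderiv I I (R g) p u)
        = mfderiv Ib Ib (Rb g) (π p) (mfderiv I Ib π p u) := fun u => by
      rw [← mfderiv_comp_apply p (hπ _) (hR g p), ← mfderiv_comp_apply p (hRb g _) (hπ p),
        hcomm g]
    simp only [pullbackForm_apply, hd]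
    exact congrArg (fun x => θb x fun i => mfderiv Ib Ib (Rb g) (π p) (mfderiv I Ib π p (w i)))
      (congrFun (hcomm g) p)
  constructor
  · intro h g x v
    obtain ⟨p, rfl⟩ := hπsurj x
    obtain ⟨w, rfl⟩ := (hπsub p).comp_left v
    have h' := h g p w
    rwa [hshift, pullbackForm_apply] at h'
  · intro h g p w
    rw [hshift, pullbackForm_apply, h g (π p)]

theorem IsHorizontalForm.descendsAlong {qb : Pb → M} {R : G → P → P} {ρ : G → V →L[ℝ] V}
    {θ : ∀ p : P, TangentSpace I p [⋀^Fin k]→ₗ[ℝ] V} (hθh : IsHorizontalForm I IM (qb ∘ π) θ)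
    (hθi : IsInvariantForm I R ρ θ) (hqb : MDifferentiable Ib IM qb)
    (hπ : MDifferentiable I Ib π) (hR : ∀ g, MDifferentiable I I (R g))
    (hfib : ∀ p p' : P, π p = π p' → ∃ g, R g p = p' ∧ π ∘ R g = π)
    (htriv : ∀ g, π ∘ R g = π → ρ g = ContinuousLinearMap.id ℝ V) :
    DescendsAlong I Ib π θ := by
  intro p p' w w' hpp hw
  obtain ⟨g, rfl, hg⟩ := hfib p p' hpp
  have hdπ : ∀ u, mfderiv I Ib π (R g p) (mfderiv I I (R g) p u) = mfderiv I Ib π p u := by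
    intro u
    rw [← mfderiv_comp_apply p (hπ _) (hR g p), hg]
  have hvert : ∀ i, mfderiv I I (R g) p (w i) - w' i
      ∈ LinearMap.ker (mfderiv I IM (qb ∘ π) (R g p) :
        TangentSpace I (R g p) →ₗ[ℝ] TangentSpace IM ((qb ∘ π) (R g p))) := by
    intro i
    rw [LinearMap.mem_ker]
    change mfderiv I IM (qb ∘ π) (R g p) _ = 0
    rw [mfderiv_comp_apply _ (hqb _) (hπ _), map_sub, hdπ, hw i, sub_self, map_zero]
  calc θ p w = ρ g (θ (R g p) fun i => mfderiv I I (R g) p (w i)) := (hθi g p w).symm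
    _ = θ (R g p) fun i => mfderiv I I (R g) p (w i) := by rw [htriv g hg]; rfl
    _ = θ (R g p) w' := (θ (R g p)).map_eq_of_forall_sub_mem _ (hθh (R g p)) hvert

theorem DescendsAlong.exists_pullbackForm_eq {θ : ∀ p : P, TangentSpace I p [⋀^Fin k]→ₗ[ℝ] V}
    (hθ : DescendsAlong I Ib π θ) (hπsurj : Function.Surjective π)
    (hπsub : ∀ p : P, Function.Surjective (mfderiv I Ib π p)) :
    ∃ θb : ∀ x : Pb, TangentSpace Ib x [⋀^Fin k]→ₗ[ℝ] V, pullbackForm π k θb = θ := by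
  choose σ hσ using hπsurj
  have hsection : ∀ x, ∃ s : TangentSpace Ib x →ₗ[ℝ] TangentSpace I (σ x),
      ∀ v, mfderiv I Ib π (σ x) (s v) = v := fun x => by
    let dπ : TangentSpace I (σ x) →ₗ[ℝ] TangentSpace Ib (π (σ x)) := mfderiv I Ib π (σ x)
    obtain ⟨s, hs⟩ := dπ.exists_rightInverse_of_surjective
      (LinearMap.range_eq_top.mpr (hπsub (σ x)))
    exact ⟨s, LinearMap.congr_fun hs⟩
  choose s hs using hsection
  refine ⟨fun x => (θ (σ x)).compLinearMap (s x), funext fun p => ?_⟩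
  ext w
  exact hθ _ _ _ _ (hσ (π p)) fun i => hs _ _

end Pullback

section

variable
    {E1 : Type} [NormedAddCommGroup E1] [NormedSpace ℝ E1]
    {H1 : Type} [TopologicalSpace H1] {I : ModelWithCorners ℝ E1 H1}
    {P : Type} [TopologicalSpace P] [ChartedSpace H1 P] [IsManifold I (⊤ : ℕ∞) P]
    {Eb : Type} [NormedAddCommGroup Eb] [NormedSpace ℝ Eb]
    {Hb : Type} [TopologicalSpace Hb] {Ib : ModelWithCorners ℝ Eb Hb}
    {Pb : Type} [TopologicalSpace Pb] [ChartedSpace Hb Pb]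
    [IsManifold Ib (⊤ : ℕ∞) Pb]
    {V : Type} [NormedAddCommGroup V] [NormedSpace ℝ V]

theorem stmt18_general
    {EM : Type} [NormedAddCommGroup EM] [NormedSpace ℝ EM]
    {HM : Type} [TopologicalSpace HM] {IM : ModelWithCorners ℝ EM HM}
    {M : Type} [TopologicalSpace M] [ChartedSpace HM M]
    (q : P → M) (qb : Pb → M) (π : P → Pb)
    (hqb : ContMDiff Ib IM (⊤ : ℕ∞) qb) (hπ : ContMDiff I Ib (⊤ : ℕ∞) π)
    (hcomp : qb ∘ π = q)
    (hπsurj : Function.Surjective π)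
    (hπsub : ∀ p : P, Function.Surjective (mfderiv I Ib π p))
    {Hgrp : Type}
    (R : Hgrp → P → P) (Rb : Hgrp → Pb → Pb)
    (hR : ∀ g, ContMDiff I I (⊤ : ℕ∞) (R g)) (hRb : ∀ g, ContMDiff Ib Ib (⊤ : ℕ∞) (Rb g))
    (hcomm : ∀ g, π ∘ R g = Rb g ∘ π)
    (hfib : ∀ p p' : P, π p = π p' → ∃ g, R g p = p' ∧ π ∘ R g = π)
    (ρ : Hgrp → V →L[ℝ] V)
    (htriv : ∀ g, π ∘ R g = π → ρ g = ContinuousLinearMap.id ℝ V)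
    (k : ℕ) :
    -- π^* is linear
    (∀ θ₁ θ₂ : ∀ x : Pb, TangentSpace Ib x [⋀^Fin k]→ₗ[ℝ] V,
      pullbackForm (I := I) (Ib := Ib) (V := V) π k (θ₁ + θ₂)
        = pullbackForm (I := I) π k θ₁ + pullbackForm (I := I) π k θ₂) ∧
    (∀ (c : ℝ) (θ : ∀ x : Pb, TangentSpace Ib x [⋀^Fin k]→ₗ[ℝ] V),
      pullbackForm (I := I) (Ib := Ib) (V := V) π k (c • θ)
        = c • pullbackForm (I := I) π k θ) ∧
    -- π^* is a bijection from the invariant horizontal forms on P̄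
    -- onto the invariant horizontal forms on P
    Set.BijOn (pullbackForm (I := I) (Ib := Ib) (V := V) π k)
      {θb | (∀ (x : Pb) (v : Fin k → TangentSpace Ib x),
              (∃ i, v i ∈ LinearMap.ker (mfderiv Ib IM qb x : TangentSpace Ib x →ₗ[ℝ] TangentSpace IM (qb x))) → θb x v = 0) ∧
            (∀ (g : Hgrp) (x : Pb) (v : Fin k → TangentSpace Ib x),
              ρ g (θb (Rb g x) fun i => mfderiv Ib Ib (Rb g) x (v i)) = θb x v)}
      {θ | (∀ (p : P) (v : Fin k → TangentSpace I p),
              (∃ i, v i ∈ LinearMap.ker (mfderiv I IM q p : TangentSpace I p →ₗ[ℝ] TangentSpace IM (q p))) → θ p v = 0) ∧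
            (∀ (g : Hgrp) (p : P) (v : Fin k → TangentSpace I p),
              ρ g (θ (R g p) fun i => mfderiv I I (R g) p (v i)) = θ p v)} ∧
    -- π^* intertwines the absolute derivatives of functions
    (∀ (prh : ∀ p : P, TangentSpace I p →ₗ[ℝ] TangentSpace I p)
       (prhb : ∀ x : Pb, TangentSpace Ib x →ₗ[ℝ] TangentSpace Ib x),
      (∀ (p : P) (v : TangentSpace I p),
        prhb (π p) (mfderiv I Ib π p v) = mfderiv I Ib π p (prh p v)) →
      ∀ f : Pb → V, ContMDiff Ib 𝓘(ℝ, V) (⊤ : ℕ∞) f →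
        ∀ (p : P) (v : TangentSpace I p),
          mfderiv Ib 𝓘(ℝ, V) f (π p) (prhb (π p) (mfderiv I Ib π p v))
            = mfderiv I 𝓘(ℝ, V) (f ∘ π) p (prh p v)) := by
  subst hcomp
  have hqb' := hqb.mdifferentiable (by simp)
  have hπ' := hπ.mdifferentiable (by simp)
  have hR' := fun g => (hR g).mdifferentiable (by simp)
  have hRb' := fun g => (hRb g).mdifferentiable (by simp)
  refine ⟨pullbackForm_add, pullbackForm_smul,
    ⟨?_, (pullbackForm_injective hπsurj hπsub).injOn, ?_⟩, ?_⟩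
  · rintro θb ⟨hhor, hinv⟩
    exact ⟨(isHorizontalForm_pullbackForm_iff hπsurj hπsub hqb' hπ').mpr hhor,
      (isInvariantForm_pullbackForm_iff hπsurj hπsub hπ' hR' hRb' hcomm).mpr hinv⟩
  · rintro θ ⟨hhor, hinv⟩
    have hdesc := IsHorizontalForm.descendsAlong hhor hinv hqb' hπ' hR' hfib htriv
    obtain ⟨θb, rfl⟩ := hdesc.exists_pullbackForm_eq hπsurj hπsub
    exact ⟨θb, ⟨(isHorizontalForm_pullbackForm_iff hπsurj hπsub hqb' hπ').mp hhor,
      (isInvariantForm_pullbackForm_iff hπsurj hπsub hπ' hR' hRb' hcomm).mp hinv⟩, rfl⟩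
  · intro prh prhb hcompat f hf p v
    rw [hcompat, mfderiv_comp_apply p (hf.mdifferentiable (by simp) _) (hπ' p)]

/-- For the quotient `π : P → P̄ = P/N` of a principal bundle with
representation `ρ` trivial on `N` (elements acting trivially on `P̄` act trivially
on `V`), the pullback `π^*` is a linear bijection from the invariant horizontal
`V`-valued `k`-forms on `P̄` onto the invariant horizontal `k`-forms on `P`, and it
commutes with the absolute derivatives `D f = df ∘ pr_h` determined by compatible
horizontal projections `pr_h` on `P` and `P̄`. -/
theorem stmt18
    {EM : Type} [NormedAddCommGroup EM] [NormedSpace ℝ EM]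
    {HM : Type} [TopologicalSpace HM] {IM : ModelWithCorners ℝ EM HM}
    {M : Type} [TopologicalSpace M] [ChartedSpace HM M] [IsManifold IM (⊤ : ℕ∞) M]
    (q : P → M) (qb : Pb → M) (π : P → Pb)
    (hq : ContMDiff I IM (⊤ : ℕ∞) q) (hqb : ContMDiff Ib IM (⊤ : ℕ∞) qb) (hπ : ContMDiff I Ib (⊤ : ℕ∞) π)
    (hcomp : qb ∘ π = q)
    (hπsurj : Function.Surjective π)
    (hπsub : ∀ p : P, Function.Surjective (mfderiv I Ib π p))
    {Hgrp : Type} [Group Hgrp]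
    (R : Hgrp → P → P) (Rb : Hgrp → Pb → Pb)
    (hR : ∀ g, ContMDiff I I (⊤ : ℕ∞) (R g)) (hRb : ∀ g, ContMDiff Ib Ib (⊤ : ℕ∞) (Rb g))
    (hR1 : R 1 = id) (hRm : ∀ g h : Hgrp, R (g * h) = R h ∘ R g)
    (hcomm : ∀ g, π ∘ R g = Rb g ∘ π)
    (hqR : ∀ g, q ∘ R g = q)
    (hfib : ∀ p p' : P, π p = π p' → ∃ g, R g p = p' ∧ π ∘ R g = π)
    (ρ : Hgrp → V →L[ℝ] V) (hρ1 : ρ 1 = ContinuousLinearMap.id ℝ V)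
    (hρm : ∀ g h : Hgrp, ρ (g * h) = (ρ g).comp (ρ h))
    (htriv : ∀ g, π ∘ R g = π → ρ g = ContinuousLinearMap.id ℝ V)
    (k : ℕ) :
    -- π^* is linear
    (∀ θ₁ θ₂ : ∀ x : Pb, TangentSpace Ib x [⋀^Fin k]→ₗ[ℝ] V,
      pullbackForm (I := I) (Ib := Ib) (V := V) π k (θ₁ + θ₂)
        = pullbackForm (I := I) π k θ₁ + pullbackForm (I := I) π k θ₂) ∧
    (∀ (c : ℝ) (θ : ∀ x : Pb, TangentSpace Ib x [⋀^Fin k]→ₗ[ℝ] V),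
      pullbackForm (I := I) (Ib := Ib) (V := V) π k (c • θ)
        = c • pullbackForm (I := I) π k θ) ∧
    -- π^* is a bijection from the invariant horizontal forms on P̄
    -- onto the invariant horizontal forms on P
    Set.BijOn (pullbackForm (I := I) (Ib := Ib) (V := V) π k)
      {θb | (∀ (x : Pb) (v : Fin k → TangentSpace Ib x),
              (∃ i, v i ∈ LinearMap.ker (mfderiv Ib IM qb x : TangentSpace Ib x →ₗ[ℝ] TangentSpace IM (qb x))) → θb x v = 0) ∧
            (∀ (g : Hgrp) (x : Pb) (v : Fin k → TangentSpace Ib x),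
              ρ g (θb (Rb g x) fun i => mfderiv Ib Ib (Rb g) x (v i)) = θb x v)}
      {θ | (∀ (p : P) (v : Fin k → TangentSpace I p),
              (∃ i, v i ∈ LinearMap.ker (mfderiv I IM q p : TangentSpace I p →ₗ[ℝ] TangentSpace IM (q p))) → θ p v = 0) ∧
            (∀ (g : Hgrp) (p : P) (v : Fin k → TangentSpace I p),
              ρ g (θ (R g p) fun i => mfderiv I I (R g) p (v i)) = θ p v)} ∧
    -- π^* intertwines the absolute derivatives of functions
    (∀ (prh : ∀ p : P, TangentSpace I p →ₗ[ℝ] TangentSpace I p)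
       (prhb : ∀ x : Pb, TangentSpace Ib x →ₗ[ℝ] TangentSpace Ib x),
      (∀ (p : P) (v : TangentSpace I p),
        prhb (π p) (mfderiv I Ib π p v) = mfderiv I Ib π p (prh p v)) →
      ∀ f : Pb → V, ContMDiff Ib 𝓘(ℝ, V) (⊤ : ℕ∞) f →
        ∀ (p : P) (v : TangentSpace I p),
          mfderiv Ib 𝓘(ℝ, V) f (π p) (prhb (π p) (mfderiv I Ib π p v))
            = mfderiv I 𝓘(ℝ, V) (f ∘ π) p (prh p v)) :=
  stmt18_general q qb π hqb hπ hcomp hπsurj hπsub R Rb hR hRb hcomm hfib ρ htriv k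

end
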